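/- For a pure bipartite state |ψ⟩ with Schmidt decomposition |ψ⟩ = ∑_i √λ_i |i⟩_A|i⟩_B, the minimum over products of local orthonormal bases of the Shannon entropy of the joint measurement outcome distribution equals the entanglement entropy −∑_i λ_i ln λ_i; hence the work deficit of a bipartite pure state equals its entanglement entropy. -/
import Mathlib


noncomputable section
open scoped BigOperators

/-- Shannon entropy (natural logarithm), with the convention `0 * log 0 = 0`. -/
def shannon {α : Type*} [Fintype α] (p : α → ℝ) : ℝ := -∑ y, p y * Real.log (p y)

/-- `B` lists the members of an orthonormal basis of `ℂ^D` (the rows `B a` are the basis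
vectors). -/
def ONB {D : ℕ} (B : Fin D → Fin D → ℂ) : Prop :=
  ∀ a b, (∑ i, (starRingEnd ℂ) (B a i) * B b i) = if a = b then 1 else 0

/-- Amplitudes (in the Schmidt bases) of the bipartite pure state with Schmidt coefficients
`λ`: `|ψ⟩ = ∑_i √λ_i |i⟩_A |i⟩_B`. -/
def schmidtState {D : ℕ} (lam : Fin D → ℝ) (a b : Fin D) : ℂ :=
  if a = b then Complex.ofReal (Real.sqrt (lam a)) else 0

/-- Born-rule joint outcome distribution of measuring the two subsystems of the pure state
with amplitudes `ψ` in the local orthonormal bases `A`, `B`. -/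
def bornProb2 {D : ℕ} (ψ : Fin D → Fin D → ℂ) (A B : Fin D → Fin D → ℂ)
    (y : Fin D × Fin D) : ℝ :=
  Complex.normSq (∑ s, ∑ t, (starRingEnd ℂ) (A y.1 s) * (starRingEnd ℂ) (B y.2 t) * ψ s t)

-- columns of an ONB matrix are orthonormal
lemma ONB_col {D : ℕ} {B : Fin D → Fin D → ℂ} (h : ONB B) (s t : Fin D) :
    ∑ b, (starRingEnd ℂ) (B b s) * B b t = if s = t then 1 else 0 := by
  have hM : (Matrix.of B) * (Matrix.of B).conjTranspose = 1 := by
    ext a b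
    have := h b a
    simp only [Matrix.mul_apply, Matrix.conjTranspose_apply, Matrix.of_apply,
      Matrix.one_apply]
    simp only [← starRingEnd_apply]
    rw [show (∑ i, B a i * (starRingEnd ℂ) (B b i)) = ∑ i, (starRingEnd ℂ) (B b i) * B a i from
      Finset.sum_congr rfl fun i _ => mul_comm _ _, this]
    simp [eq_comm]
  have hM' : (Matrix.of B).conjTranspose * (Matrix.of B) = 1 := mul_eq_one_comm.mp hM
  have h2 : ((Matrix.of B).conjTranspose * (Matrix.of B)) s t = (1 : Matrix (Fin D) (Fin D) ℂ) s t := by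
    rw [hM']
  simpa [Matrix.mul_apply, Matrix.conjTranspose_apply, Matrix.one_apply] using h2

lemma born_eq {D : ℕ} (lam : Fin D → ℝ) (A B : Fin D → Fin D → ℂ) (a b : Fin D) :
    bornProb2 (schmidtState lam) A B (a, b) =
      Complex.normSq (∑ s, ((starRingEnd ℂ) (A a s) * Complex.ofReal (Real.sqrt (lam s))) *
        (starRingEnd ℂ) (B b s)) := by
  unfold bornProb2 schmidtState
  congr 1
  refine Finset.sum_congr rfl fun s _ => ?_
  rw [Finset.sum_eq_single s]
  · ring_nf; simp
  · intro t _ hts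
    simp [Ne.symm hts]
  · simp

lemma marginal_eq {D : ℕ} (lam : Fin D → ℝ) (hlam0 : ∀ i, 0 ≤ lam i)
    {A B : Fin D → Fin D → ℂ} (hB : ONB B) (a : Fin D) :
    ∑ b, bornProb2 (schmidtState lam) A B (a, b) = ∑ s, Complex.normSq (A a s) * lam s := by
  set v : Fin D → ℂ := fun s => (starRingEnd ℂ) (A a s) * Complex.ofReal (Real.sqrt (lam s))
    with hv
  have key : (Complex.ofReal (∑ b, Complex.normSq (∑ s, v s * (starRingEnd ℂ) (B b s))) : ℂ)
      = Complex.ofReal (∑ s, Complex.normSq (A a s) * lam s) := by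
    push_cast
    calc (∑ b, (Complex.normSq (∑ s, v s * (starRingEnd ℂ) (B b s)) : ℂ))
        = ∑ b, (∑ s, v s * (starRingEnd ℂ) (B b s)) *
            (starRingEnd ℂ) (∑ t, v t * (starRingEnd ℂ) (B b t)) := by
          refine Finset.sum_congr rfl fun b _ => ?_
          rw [Complex.mul_conj]
      _ = ∑ s, ∑ t, (v s * (starRingEnd ℂ) (v t)) * ∑ b, (starRingEnd ℂ) (B b s) * B b t := by
          have step : ∀ b, (∑ s, v s * (starRingEnd ℂ) (B b s)) *
              (starRingEnd ℂ) (∑ t, v t * (starRingEnd ℂ) (B b t))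
              = ∑ s, ∑ t, (v s * (starRingEnd ℂ) (v t)) *
                ((starRingEnd ℂ) (B b s) * B b t) := by
            intro b
            rw [Finset.sum_mul]
            refine Finset.sum_congr rfl fun s _ => ?_
            rw [map_sum, Finset.mul_sum]
            refine Finset.sum_congr rfl fun t _ => ?_
            simp only [map_mul, Complex.conj_conj]
            ring
          calc ∑ b, (∑ s, v s * (starRingEnd ℂ) (B b s)) *
                (starRingEnd ℂ) (∑ t, v t * (starRingEnd ℂ) (B b t))
              = ∑ b, ∑ s, ∑ t, (v s * (starRingEnd ℂ) (v t)) *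
                ((starRingEnd ℂ) (B b s) * B b t) := Finset.sum_congr rfl fun b _ => step b
            _ = ∑ s, ∑ b, ∑ t, (v s * (starRingEnd ℂ) (v t)) *
                ((starRingEnd ℂ) (B b s) * B b t) := Finset.sum_comm
            _ = ∑ s, ∑ t, ∑ b, (v s * (starRingEnd ℂ) (v t)) *
                ((starRingEnd ℂ) (B b s) * B b t) :=
                Finset.sum_congr rfl fun s _ => Finset.sum_comm
            _ = ∑ s, ∑ t, (v s * (starRingEnd ℂ) (v t)) *
                ∑ b, (starRingEnd ℂ) (B b s) * B b t := by
                refine Finset.sum_congr rfl fun s _ => Finset.sum_congr rfl fun t _ => ?_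
                rw [Finset.mul_sum]
      _ = ∑ s, (Complex.normSq (A a s) : ℂ) * (lam s : ℂ) := by
          refine Finset.sum_congr rfl fun s _ => ?_
          rw [Finset.sum_eq_single s]
          · rw [ONB_col hB s s, if_pos rfl, mul_one, hv]
            simp only [map_mul, Complex.conj_conj, Complex.conj_ofReal]
            rw [show (starRingEnd ℂ) (A a s) * (Real.sqrt (lam s) : ℂ) *
                (A a s * (Real.sqrt (lam s) : ℂ)) =
                ((starRingEnd ℂ) (A a s) * A a s) * ((Real.sqrt (lam s) : ℂ) *
                (Real.sqrt (lam s) : ℂ)) from by ring]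
            rw [show (starRingEnd ℂ) (A a s) * A a s = (Complex.normSq (A a s) : ℂ) from by
              rw [mul_comm]; exact Complex.mul_conj _]
            norm_cast
            rw [Real.mul_self_sqrt (hlam0 s)]
          · intro t _ hts
            rw [ONB_col hB s t, if_neg (Ne.symm hts), mul_zero]
          · simp
  have h2 := Complex.ofReal_inj.mp key
  calc ∑ b, bornProb2 (schmidtState lam) A B (a, b)
      = ∑ b, Complex.normSq (∑ s, v s * (starRingEnd ℂ) (B b s)) :=
        Finset.sum_congr rfl fun b _ => born_eq lam A B a b
    _ = _ := h2

lemma ONB_row_normSq {D : ℕ} {A : Fin D → Fin D → ℂ} (hA : ONB A) (a : Fin D) :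
    ∑ s, Complex.normSq (A a s) = 1 := by
  have := hA a a
  rw [if_pos rfl] at this
  have h2 : (Complex.ofReal (∑ s, Complex.normSq (A a s)) : ℂ) = 1 := by
    push_cast
    rw [← this]
    exact Finset.sum_congr rfl fun s _ => by rw [← Complex.mul_conj]; ring
  exact_mod_cast h2

lemma ONB_col_normSq {D : ℕ} {A : Fin D → Fin D → ℂ} (hA : ONB A) (s : Fin D) :
    ∑ a, Complex.normSq (A a s) = 1 := by
  have := ONB_col hA s s
  rw [if_pos rfl] at this
  have h2 : (Complex.ofReal (∑ a, Complex.normSq (A a s)) : ℂ) = 1 := by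
    push_cast
    rw [← this]
    exact Finset.sum_congr rfl fun a _ => by rw [← Complex.mul_conj]; ring
  exact_mod_cast h2

lemma ONB_id {D : ℕ} : ONB (fun a i : Fin D => if a = i then (1:ℂ) else 0) := by
  intro a b
  simp only [apply_ite (starRingEnd ℂ), map_one, map_zero, ite_mul, one_mul, zero_mul]
  rw [Finset.sum_eq_single a]
  · simp [eq_comm]
  · intro t _ hta
    rw [if_neg (Ne.symm hta)]
  · simp

lemma shannon_id {D : ℕ} (lam : Fin D → ℝ) (hlam0 : ∀ i, 0 ≤ lam i) :
    shannon (bornProb2 (schmidtState lam) (fun a i => if a = i then (1:ℂ) else 0)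
      (fun a i => if a = i then (1:ℂ) else 0)) = -∑ i, lam i * Real.log (lam i) := by
  have hb : ∀ a b : Fin D, bornProb2 (schmidtState lam)
      (fun a i => if a = i then (1:ℂ) else 0) (fun a i => if a = i then (1:ℂ) else 0) (a, b)
      = if a = b then lam a else 0 := by
    intro a b
    unfold bornProb2
    have hsum : (∑ s, ∑ t, (starRingEnd ℂ) (if a = s then (1:ℂ) else 0) *
        (starRingEnd ℂ) (if b = t then (1:ℂ) else 0) * schmidtState lam s t)
        = schmidtState lam a b := by
      rw [Finset.sum_eq_single a]
      · rw [Finset.sum_eq_single b]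
        · simp
        · intro t _ htb; simp [Ne.symm htb]
        · simp
      · intro s _ hsa
        simp [Ne.symm hsa]
      · simp
    rw [hsum]
    unfold schmidtState
    split
    · rw [Complex.normSq_ofReal, Real.mul_self_sqrt (hlam0 a)]
    · simp
  unfold shannon
  rw [Fintype.sum_prod_type]
  congr 1
  refine Finset.sum_congr rfl fun a _ => ?_
  rw [Finset.sum_eq_single a]
  · rw [hb a a, if_pos rfl]
  · intro b _ hba
    rw [hb a b, if_neg (Ne.symm hba)]
    simp
  · simp

lemma lower_bound {D : ℕ} (lam : Fin D → ℝ) (hlam0 : ∀ i, 0 ≤ lam i)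
    {A B : Fin D → Fin D → ℂ} (hA : ONB A) (hB : ONB B) :
    -∑ i, lam i * Real.log (lam i) ≤ shannon (bornProb2 (schmidtState lam) A B) := by
  set P : Fin D × Fin D → ℝ := bornProb2 (schmidtState lam) A B with hPdef
  set q : Fin D → ℝ := fun a => ∑ s, Complex.normSq (A a s) * lam s with hqdef
  have hP0 : ∀ y, 0 ≤ P y := fun y => Complex.normSq_nonneg _
  have hq : ∀ a, ∑ b, P (a, b) = q a := fun a => marginal_eq lam hlam0 hB a
  have hPle : ∀ a b, P (a, b) ≤ q a := by
    intro a b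
    rw [← hq a]
    exact Finset.single_le_sum (fun b _ => hP0 (a, b)) (Finset.mem_univ b)
  -- Step 1: shannon P ≥ ∑ a, negMulLog (q a)
  have step1 : ∑ a, Real.negMulLog (q a) ≤ shannon P := by
    unfold shannon
    rw [Fintype.sum_prod_type, ← Finset.sum_neg_distrib]
    refine Finset.sum_le_sum fun a _ => ?_
    rw [Real.negMulLog, neg_mul]
    refine neg_le_neg ?_
    calc ∑ b, P (a, b) * Real.log (P (a, b))
        ≤ ∑ b, P (a, b) * Real.log (q a) := by
          refine Finset.sum_le_sum fun b _ => ?_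
          rcases eq_or_lt_of_le (hP0 (a, b)) with h0 | h0
          · rw [← h0]; simp
          · exact mul_le_mul_of_nonneg_left (Real.log_le_log h0 (hPle a b)) (hP0 (a, b))
      _ = q a * Real.log (q a) := by rw [← Finset.sum_mul, hq a]
  -- Step 2: ∑ a, negMulLog (q a) ≥ ∑ s, negMulLog (lam s)
  have step2 : ∑ s, Real.negMulLog (lam s) ≤ ∑ a, Real.negMulLog (q a) := by
    have jensen : ∀ a, ∑ s, Complex.normSq (A a s) * Real.negMulLog (lam s)
        ≤ Real.negMulLog (q a) := by
      intro a
      have := Real.concaveOn_negMulLog.le_map_sum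
        (t := Finset.univ) (w := fun s => Complex.normSq (A a s)) (p := lam)
        (fun s _ => Complex.normSq_nonneg _) (ONB_row_normSq hA a)
        (fun s _ => Set.mem_Ici.mpr (hlam0 s))
      simpa [smul_eq_mul, hqdef] using this
    calc ∑ s, Real.negMulLog (lam s)
        = ∑ s, (∑ a, Complex.normSq (A a s)) * Real.negMulLog (lam s) := by
          refine Finset.sum_congr rfl fun s _ => ?_
          rw [ONB_col_normSq hA s, one_mul]
      _ = ∑ a, ∑ s, Complex.normSq (A a s) * Real.negMulLog (lam s) := by
          rw [Finset.sum_comm]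
          exact Finset.sum_congr rfl fun s _ => Finset.sum_mul _ _ _
      _ ≤ ∑ a, Real.negMulLog (q a) := Finset.sum_le_sum fun a _ => jensen a
  have hent : -∑ i, lam i * Real.log (lam i) = ∑ s, Real.negMulLog (lam s) := by
    rw [← Finset.sum_neg_distrib]
    exact Finset.sum_congr rfl fun s _ => by rw [Real.negMulLog, neg_mul]
  rw [hent]
  exact le_trans step2 step1

/-- For a bipartite pure state with Schmidt coefficients `λ`, the minimum over products of
local orthonormal bases of the Shannon entropy of the joint outcome distribution equals the
entanglement entropy `−∑_i λ_i ln λ_i`; hence the work deficit of a bipartite pure state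
equals its entanglement entropy. -/
theorem bipartite_pure_deficit_eq_entanglement_entropy {D : ℕ} (lam : Fin D → ℝ)
    (hlam0 : ∀ i, 0 ≤ lam i) (hlam1 : ∑ i, lam i = 1) :
    sInf {h : ℝ | ∃ A B : Fin D → Fin D → ℂ, ONB A ∧ ONB B ∧
        h = shannon (bornProb2 (schmidtState lam) A B)}
      = -∑ i, lam i * Real.log (lam i) := by
  set S := {h : ℝ | ∃ A B : Fin D → Fin D → ℂ, ONB A ∧ ONB B ∧
      h = shannon (bornProb2 (schmidtState lam) A B)} with hS
  have hmem : (-∑ i, lam i * Real.log (lam i)) ∈ S :=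
    ⟨_, _, ONB_id (D := D), ONB_id (D := D), (shannon_id lam hlam0).symm⟩
  have hlb : ∀ h ∈ S, -∑ i, lam i * Real.log (lam i) ≤ h := by
    rintro h ⟨A, B, hA, hB, rfl⟩
    exact lower_bound lam hlam0 hA hB
  exact le_antisymm (csInf_le ⟨_, hlb⟩ hmem) (le_csInf ⟨_, hmem⟩ hlb)
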